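/- arXiv:math/0607577 — 2 statements merged into one kernel-verified Lean document; each statement's English description precedes it below -/
import Mathlib

section
/- Let K be a field, G = Spec A a finite group scheme over K with A a cosemisimple Hopf algebra, S a K-scheme, and X = Spec_S B an S-scheme affine over S with G-operation over S, where B is the corresponding quasicoherent G-sheaf of O_S-algebras. Then the natural morphism of S-functors GHilb_S X → GGrass_S(B), which sends a quotient G-sheaf of B_T-modules [B_T → C] to the underlying quotient of O_T-modules, is a closed embedding of functors: GHilb_S X is a closed subfunctor of GGrass_S(B). -/
open CategoryTheory AlgebraicGeometry Limits TensorProduct Opposite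

noncomputable section

namespace GHilbPaper

/-! ### Generalities: flatness, projectivity, cosemisimplicity -/

/-- A morphism of schemes is flat if all induced maps on stalks are flat. -/
def IsFlatMorphism {X Y : Scheme} (f : X ⟶ Y) : Prop :=
  ∀ x : X, letI := (f.stalkMap x).hom.toAlgebra
    Module.Flat (Y.presheaf.stalk (f.base x)) (X.presheaf.stalk x)

/-- Projective `n`-space over `ℤ`. -/
def ProjSpaceInt (n : ℕ) : Scheme :=
  letI := MvPolynomial.gradedAlgebra (σ := Fin (n+1)) (R := ℤ)
  AlgebraicGeometry.Proj (MvPolynomial.homogeneousSubmodule (Fin (n+1)) ℤ)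

/-- Projective `n`-space over a scheme `S`. -/
def ProjSpaceOver (n : ℕ) (S : Scheme) : Scheme :=
  pullback (specZIsTerminal.from (ProjSpaceInt n)) (specZIsTerminal.from S)

/-- A morphism is projective if it factors through a closed immersion into some
relative projective space. -/
def IsProjectiveMorphism {X S : Scheme} (f : X ⟶ S) : Prop :=
  ∃ (n : ℕ) (g : X ⟶ ProjSpaceOver n S),
    IsClosedImmersion g ∧ g ≫ pullback.snd _ _ = f

/-- A morphism is quasiprojective if it factors through an immersion into some
relative projective space. -/
def IsQuasiProjectiveMorphism {X S : Scheme} (f : X ⟶ S) : Prop :=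
  ∃ (n : ℕ) (g : X ⟶ ProjSpaceOver n S),
    IsImmersion g ∧ g ≫ pullback.snd _ _ = f

/-- `C` is a subcoalgebra of the `K`-coalgebra `A`. -/
def IsSubcoalgebra (K A : Type) [CommRing K] [AddCommGroup A] [Module K A] [Coalgebra K A]
    (C : Submodule K A) : Prop :=
  ∀ x ∈ C, Coalgebra.comul (R := K) x ∈ LinearMap.range (TensorProduct.map C.subtype C.subtype)

/-- A coalgebra is cosemisimple if it is the (internal) direct sum of simple subcoalgebras. -/
def IsCosemisimple (K A : Type) [CommRing K] [AddCommGroup A] [Module K A]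
    [Coalgebra K A] : Prop :=
  ∃ (ι : Type) (𝒜 : ι → Submodule K A),
    (∀ i, IsSubcoalgebra K A (𝒜 i) ∧ 𝒜 i ≠ ⊥ ∧
      ∀ D ≤ 𝒜 i, IsSubcoalgebra K A D → D = ⊥ ∨ D = 𝒜 i) ∧
    iSupIndep 𝒜 ∧ iSup 𝒜 = ⊤

/-- The ring homomorphism `R → Γ(W, ⊤)` corresponding to a morphism `W ⟶ Spec R`. -/
def ΓOfSpec {W : Scheme} (R : CommRingCat) (f : W ⟶ Spec R) : R →+* Γ(W, ⊤) :=
  ((Scheme.ΓSpecIso R).inv ≫ Scheme.Γ.map f.op : _ ⟶ _).hom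

/-- The ring homomorphism on global sections induced by a morphism of schemes. -/
def ΓMap {W V : Scheme} (f : W ⟶ V) : Γ(V, ⊤) →+* Γ(W, ⊤) :=
  (Scheme.Γ.map f.op : _ ⟶ _).hom

/-! ### Group schemes (via their functors of points) and actions -/

variable {S : Scheme}

/-- A group law on the functor of points of an `S`-scheme `G`; this is exactly the datum of
a group scheme structure on `G` over `S`. -/
structure GroupLaw (G : Over S) where
  mul : ∀ {T : Over S}, (T ⟶ G) → (T ⟶ G) → (T ⟶ G)
  one : ∀ T : Over S, T ⟶ G
  inv : ∀ {T : Over S}, (T ⟶ G) → (T ⟶ G)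
  mul_assoc : ∀ {T : Over S} (a b c : T ⟶ G), mul (mul a b) c = mul a (mul b c)
  one_mul : ∀ {T : Over S} (a : T ⟶ G), mul (one T) a = a
  mul_one : ∀ {T : Over S} (a : T ⟶ G), mul a (one T) = a
  inv_mul : ∀ {T : Over S} (a : T ⟶ G), mul (inv a) a = one T
  mul_comp : ∀ {T' T : Over S} (u : T' ⟶ T) (a b : T ⟶ G),
    u ≫ mul a b = mul (u ≫ a) (u ≫ b)
  one_comp : ∀ {T' T : Over S} (u : T' ⟶ T), u ≫ one T = one T'

/-- An operation of the group scheme `(G, law)` on the `S`-scheme `X` over `S`,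
in terms of functors of points. -/
structure ActionOn {G : Over S} (law : GroupLaw G) (X : Over S) where
  smul : ∀ {T : Over S}, (T ⟶ G) → (T ⟶ X) → (T ⟶ X)
  one_smul : ∀ {T : Over S} (x : T ⟶ X), smul (law.one T) x = x
  mul_smul : ∀ {T : Over S} (g h : T ⟶ G) (x : T ⟶ X),
    smul (law.mul g h) x = smul g (smul h x)
  smul_comp : ∀ {T' T : Over S} (u : T' ⟶ T) (g : T ⟶ G) (x : T ⟶ X),
    u ≫ smul g x = smul (u ≫ g) (u ≫ x)

/-- The trivial action. -/
def ActionOn.IsTrivial {G : Over S} {law : GroupLaw G} {X : Over S} (a : ActionOn law X) : Prop :=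
  ∀ {T : Over S} (g : T ⟶ G) (x : T ⟶ X), a.smul g x = x

/-- Equivariance of a morphism of `S`-schemes with `G`-operation. -/
def IsEquivariant {G : Over S} {law : GroupLaw G} {X Y : Over S}
    (aX : ActionOn law X) (aY : ActionOn law Y) (φ : X ⟶ Y) : Prop :=
  ∀ {T : Over S} (g : T ⟶ G) (x : T ⟶ X), aX.smul g x ≫ φ = aY.smul g (x ≫ φ)

/-- The data of an action of `(G, law)` on `X` over `S` together with a factorization
`X → B → S` of the structure morphism of `X` which is preserved by the action;
`B` serves as base scheme for (relative) `G`-Hilbert functors. -/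
structure ActData {G : Over S} (law : GroupLaw G) (X : Over S) where
  act : ActionOn law X
  B : Scheme
  β : B ⟶ S
  χ : X.left ⟶ B
  hχ : χ ≫ β = X.hom
  hact : ∀ {T₀ : Over S} (g : T₀ ⟶ G) (x : T₀ ⟶ X),
    (act.smul g x).left ≫ χ = x.left ≫ χ

/-- The absolute case: `B = S`. -/
def ActionOn.toActData {G : Over S} {law : GroupLaw G} {X : Over S}
    (act : ActionOn law X) : ActData law X where
  act := act
  B := S
  β := 𝟙 S
  χ := X.hom
  hχ := Category.comp_id _
  hact := fun g x => (Over.w (act.smul g x)).trans (Over.w x).symm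


variable {S : Scheme}

/-! ### Clusters: finite flat closed subschemes of `X ×_B T` -/

/-- A closed subscheme of `X ×_B T`, finite and flat over `T`. -/
structure RawCluster {Xs B : Scheme} (χ : Xs ⟶ B) (T : Over B) where
  Z : Scheme
  ι : Z ⟶ pullback χ T.hom
  isClosed : IsClosedImmersion ι
  isFinite : IsFinite (ι ≫ pullback.snd χ T.hom)
  isFlat : IsFlatMorphism (ι ≫ pullback.snd χ T.hom)

/-- The projection of a cluster to the base `T`. -/
def RawCluster.π {Xs B : Scheme} {χ : Xs ⟶ B} {T : Over B} (c : RawCluster χ T) :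
    c.Z ⟶ T.left :=
  c.ι ≫ pullback.snd χ T.hom

/-- Two clusters are equivalent if they differ by an isomorphism compatible with the
embeddings; they then define the same subscheme. -/
def RawCluster.Equiv {Xs B : Scheme} {χ : Xs ⟶ B} {T : Over B}
    (c c' : RawCluster χ T) : Prop :=
  ∃ e : c.Z ≅ c'.Z, e.hom ≫ c'.ι = c.ι

/-- Scheme-theoretic fiber of a cluster over a point `t` of `T`. -/
@[reducible] def RawCluster.fiberAt {Xs B : Scheme} {χ : Xs ⟶ B} {T : Over B} (c : RawCluster χ T)
    (t : T.left) : Scheme :=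
  pullback c.π (T.left.fromSpecResidueField t)

/-- All fibers of the cluster are `0`-dimensional of degree `n`, i.e.
`h⁰(Z_t, O_{Z_t}) = n` for all `t ∈ T`. -/
def RawCluster.DegreeFibers {Xs B : Scheme} {χ : Xs ⟶ B} {T : Over B} (c : RawCluster χ T)
    (n : ℕ) : Prop :=
  ∀ t : T.left,
    letI := (ΓOfSpec (T.left.residueField t)
      (pullback.snd c.π (T.left.fromSpecResidueField t))).toModule
    Module.finrank (T.left.residueField t) Γ(c.fiberAt t, ⊤) = n

variable {G : Over S} {law : GroupLaw G} {X : Over S}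

lemma pt_over (D : ActData law X) {T T' : Over D.B} (f : T' ⟶ T)
    (w : T'.left ⟶ pullback D.χ T.hom) (hw : w ≫ pullback.snd D.χ T.hom = f.left) :
    (w ≫ pullback.fst D.χ T.hom) ≫ X.hom = (Over.mk (T'.hom ≫ D.β)).hom := by
  show _ = T'.hom ≫ D.β
  rw [← D.hχ, Category.assoc, pullback.condition_assoc, ← Category.assoc w, hw,
    ← Category.assoc, Over.w f]

/-- The underlying `X`-point (over `S`) of a `T'`-point of `X ×_B T`. -/
def xPoint (D : ActData law X) {T T' : Over D.B} (f : T' ⟶ T)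
    (w : T'.left ⟶ pullback D.χ T.hom) (hw : w ≫ pullback.snd D.χ T.hom = f.left) :
    Over.mk (T'.hom ≫ D.β) ⟶ X :=
  Over.homMk (w ≫ pullback.fst D.χ T.hom) (pt_over D f w hw)

lemma act_pt_over (D : ActData law X) {T T' : Over D.B} (f : T' ⟶ T)
    (g : Over.mk (T'.hom ≫ D.β) ⟶ G)
    (w : T'.left ⟶ pullback D.χ T.hom) (hw : w ≫ pullback.snd D.χ T.hom = f.left) :
    (D.act.smul g (xPoint D f w hw)).left ≫ D.χ = f.left ≫ T.hom := by
  rw [D.hact]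
  show (w ≫ pullback.fst D.χ T.hom) ≫ D.χ = f.left ≫ T.hom
  rw [Category.assoc, pullback.condition, ← Category.assoc, hw]

/-- The translate of a `T'`-point of `X ×_B T` by a group element `g ∈ G(T')`. -/
def actedPoint (D : ActData law X) {T T' : Over D.B} (f : T' ⟶ T)
    (g : Over.mk (T'.hom ≫ D.β) ⟶ G)
    (w : T'.left ⟶ pullback D.χ T.hom) (hw : w ≫ pullback.snd D.χ T.hom = f.left) :
    T'.left ⟶ pullback D.χ T.hom :=
  pullback.lift (D.act.smul g (xPoint D f w hw)).left f.left (act_pt_over D f g w hw)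

/-- The cluster `Z ⊆ X ×_B T` is stable under the operation of `G`:
every translate of a point of `Z` again lies in `Z`. This expresses that the ideal sheaf
of `Z` is a `G`-subsheaf, i.e. that `O_{X_T} → O_Z` is a quotient of `G`-sheaves. -/
def RawCluster.Stable (D : ActData law X) {T : Over D.B} (c : RawCluster D.χ T) : Prop :=
  ∀ (T' : Over D.B) (f : T' ⟶ T) (g : Over.mk (T'.hom ≫ D.β) ⟶ G)
    (z : T'.left ⟶ c.Z) (hz : (z ≫ c.ι) ≫ pullback.snd D.χ T.hom = f.left),
    ∃ z' : T'.left ⟶ c.Z, z' ≫ c.ι = actedPoint D f g (z ≫ c.ι) hz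

/-! ### The regular-representation condition on fibers -/

section Regular

variable (K A : Type) [Field K] [CommRing A] [HopfAlgebra K A]

/-- For every point `t ∈ T`, the representation of `G = Spec A` on `H⁰(Z_t, O_{Z_t})`
(encoded as an `A`-comodule structure `ρ` on the global sections of the fiber, compatible
with the geometric operation of `G`) is isomorphic to the base change to the residue field
`κ(t)` of a fixed representation, i.e. `A`-comodule, `(V, ρV)` of `G` over `K`. -/
def RawCluster.RepFibers (V : Type) [AddCommGroup V] [Module K V]
    (ρV : V →ₗ[K] A ⊗[K] V)
    (sK : S ⟶ Spec (CommRingCat.of K))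
    (q : G.left ⟶ Spec (CommRingCat.of A)) (D : ActData law X) {T : Over D.B}
    (c : RawCluster D.χ T) : Prop :=
  ∀ t : T.left,
    let κ := T.left.residueField t
    let Zt := c.fiberAt t
    let fstZ : Zt ⟶ c.Z := pullback.fst c.π (T.left.fromSpecResidueField t)
    let sndZ : Zt ⟶ Spec κ := pullback.snd c.π (T.left.fromSpecResidueField t)
    let Bt := Γ(Zt, ⊤)
    letI : Algebra K Bt :=
      (ΓOfSpec (CommRingCat.of K) (fstZ ≫ c.π ≫ T.hom ≫ D.β ≫ sK)).toAlgebra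
    letI : Algebra κ Bt := (ΓOfSpec κ sndZ).toAlgebra
    letI : Algebra K κ := (RingHom.comp ((Scheme.ΓSpecIso κ).hom : Γ(Spec κ, ⊤) ⟶ κ).hom
      (ΓOfSpec (CommRingCat.of K)
        (T.left.fromSpecResidueField t ≫ T.hom ≫ D.β ≫ sK))).toAlgebra
    ∃ ρ : Bt →ₗ[K] A ⊗[K] Bt,
      -- `ρ` is `κ(t)`-linear
      (∀ (cc : κ) (b : Bt), ρ (algebraMap κ Bt cc * b)
          = LinearMap.lTensor A (LinearMap.mulLeft K (algebraMap κ Bt cc)) (ρ b)) ∧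
      -- `ρ` is the coaction corresponding to the operation of `G` on the fiber `Z_t`
      (∀ (T'' : Over S) (g : T'' ⟶ G) (w : T''.left ⟶ Zt)
        (hw : (w ≫ fstZ ≫ c.π) ≫ T.hom ≫ D.β = T''.hom),
        letI : Algebra K Γ(T''.left, ⊤) :=
          (ΓOfSpec (CommRingCat.of K) (T''.hom ≫ sK)).toAlgebra
        ∃ z'' : T''.left ⟶ Zt,
          (z'' ≫ fstZ ≫ c.ι = pullback.lift
            (D.act.smul g (Over.homMk (w ≫ fstZ ≫ c.ι ≫ pullback.fst D.χ T.hom)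
              (by
                rw [← D.hχ]
                simp only [Category.assoc]
                rw [pullback.condition_assoc]
                simpa [RawCluster.π, Category.assoc] using hw) : T'' ⟶ X)).left
            (w ≫ fstZ ≫ c.π)
            (by
              rw [D.hact]
              show (w ≫ fstZ ≫ c.ι ≫ pullback.fst D.χ T.hom) ≫ D.χ = _
              simp only [Category.assoc]
              rw [pullback.condition]
              simp [RawCluster.π, Category.assoc])) ∧
          z'' ≫ sndZ = w ≫ sndZ ∧
          ∃ (gA : A →ₐ[K] Γ(T''.left, ⊤)) (wA : Bt →ₐ[K] Γ(T''.left, ⊤)),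
            gA.toRingHom = ΓOfSpec (CommRingCat.of A) (g.left ≫ q) ∧
            wA.toRingHom = ΓMap w ∧
            ∀ b : Bt, ΓMap z'' b = Algebra.TensorProduct.productMap gA wA (ρ b)) ∧
      -- the fiber is isomorphic to `V ⊗ κ(t)`
      (∃ e : Bt ≃ₗ[K] κ ⊗[K] V,
        (∀ (cc : κ) (b : Bt), e (algebraMap κ Bt cc * b) = cc • e b) ∧
        (∀ b : Bt, LinearMap.lTensor A e.toLinearMap (ρ b)
          = ((TensorProduct.leftComm K κ A V).toLinearMap
              ∘ₗ LinearMap.lTensor κ ρV) (e b)))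

/-- For every point `t ∈ T`, the representation of `G = Spec A` on `H⁰(Z_t, O_{Z_t})` is
isomorphic to the regular representation over the residue field `κ(t)`: the special case
of `RepFibers` for the regular representation `(A, comul)`. -/
def RawCluster.RegularFibers (sK : S ⟶ Spec (CommRingCat.of K))
    (q : G.left ⟶ Spec (CommRingCat.of A)) (D : ActData law X) {T : Over D.B}
    (c : RawCluster D.χ T) : Prop :=
  c.RepFibers K A A (Coalgebra.comul (R := K)) sK q D

end Regular

/-! ### Cluster functors (axiomatic description of Hilbert-type functors) -/

/-- Base-change comparison map `X ×_B T' ⟶ X ×_B T` along `f : T' ⟶ T`. -/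
def pbMap {Xs B : Scheme} (χ : Xs ⟶ B) {T T' : Over B} (f : T' ⟶ T) :
    pullback χ T'.hom ⟶ pullback χ T.hom :=
  pullback.map _ _ _ _ (𝟙 _) f.left (𝟙 _) (by simp) (by simp [Over.w])

/-- `c'` is the pullback (base change) of the cluster `c` along `f : T' ⟶ T`. -/
def RawCluster.IsPullbackOf {Xs B : Scheme} {χ : Xs ⟶ B} {T T' : Over B}
    (f : T' ⟶ T) (c : RawCluster χ T) (c' : RawCluster χ T') : Prop :=
  ∃ u : c'.Z ⟶ c.Z,
    u ≫ c.ι = c'.ι ≫ pbMap χ f ∧ IsPullback u c'.π c.π f.left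

/-- A functor `F` on `(Sch/B)ᵒᵖ` whose `T`-points are exactly the clusters in `X ×_B T`
satisfying the property `P`, functorially in `T` (i.e. compatibly with base change).
This is the axiomatic description of the (equivariant, `G`-) Hilbert functors used below. -/
structure ClusterFunctor {Xs B : Scheme} (χ : Xs ⟶ B)
    (P : ∀ {T : Over B}, RawCluster χ T → Prop) where
  F : (Over B)ᵒᵖ ⥤ Type
  elem : ∀ {T : Over B}, F.obj (op T) → RawCluster χ T
  elem_prop : ∀ {T : Over B} (b : F.obj (op T)), P (elem b)
  elem_inj : ∀ {T : Over B} (b b' : F.obj (op T)), (elem b).Equiv (elem b') → b = b'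
  elem_surj : ∀ {T : Over B} (c : RawCluster χ T), P c → ∃ b, (elem b).Equiv c
  elem_map : ∀ {T T' : Over B} (f : T' ⟶ T) (b : F.obj (op T)),
    (elem b).IsPullbackOf f (elem (F.map f.op b))

/-- The defining property of the `G`-Hilbert functor: `G`-stable clusters whose fibers
realize the regular representation of `G`. -/
def GHilbProp (K A : Type) [Field K] [CommRing A] [HopfAlgebra K A]
    {G : Over S} {law : GroupLaw G} {X : Over S}
    (sK : S ⟶ Spec (CommRingCat.of K)) (q : G.left ⟶ Spec (CommRingCat.of A))
    (D : ActData law X) : ∀ {T : Over D.B}, RawCluster D.χ T → Prop :=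
  fun c => c.Stable D ∧ c.RegularFibers K A sK q D

/-! ### Geometric quotients -/

/-- The universal translation `G ×_S W ⟶ W`, `(g, w) ↦ g · w`. -/
def univAct {G : Over S} {law : GroupLaw G} {W : Over S} (aW : ActionOn law W) :
    pullback G.hom W.hom ⟶ W.left :=
  (aW.smul
    (Over.homMk (pullback.fst G.hom W.hom) pullback.condition :
      Over.mk (pullback.snd G.hom W.hom ≫ W.hom) ⟶ G)
    (Over.homMk (pullback.snd G.hom W.hom) rfl)).left

/-- `p : W ⟶ Q` is a geometric quotient of `W` by the operation of `G`:
`p` is affine, surjective, submersive and invariant, the fibers over geometric points are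
single orbits, and `O_Q` consists exactly of the `G`-invariant functions in `p_* O_W`. -/
structure IsGeometricQuotient {G : Over S} {law : GroupLaw G} {W : Over S}
    (aW : ActionOn law W) {Q : Scheme} (p : W.left ⟶ Q) : Prop where
  affine : IsAffineHom p
  surjective : Function.Surjective p.base
  submersive : Topology.IsQuotientMap p.base
  invariant : ∀ {T : Over S} (g : T ⟶ G) (x : T ⟶ W),
    (aW.smul g x).left ≫ p = x.left ≫ p
  orbits : ∀ (L : Type) [Field L] [IsAlgClosed L]
    (v₁ v₂ : Spec (CommRingCat.of L) ⟶ W.left) (_h : v₁ ≫ W.hom = v₂ ≫ W.hom),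
    v₁ ≫ p = v₂ ≫ p →
    ∃ g : Over.mk (v₁ ≫ W.hom) ⟶ G,
      (aW.smul g (Over.homMk v₁ rfl : Over.mk (v₁ ≫ W.hom) ⟶ W)).left = v₂
  sections : ∀ U : Q.Opens,
    Function.Injective (p.app U) ∧
    ∀ s : Γ(W.left, p ⁻¹ᵁ U), (s ∈ Set.range (p.app U) ↔
      (univAct aW).appLE (p ⁻¹ᵁ U)
        ((univAct aW ⁻¹ᵁ (p ⁻¹ᵁ U)) ⊓ (pullback.snd G.hom W.hom ⁻¹ᵁ (p ⁻¹ᵁ U)))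
        inf_le_left s
      = (pullback.snd G.hom W.hom).appLE (p ⁻¹ᵁ U)
        ((univAct aW ⁻¹ᵁ (p ⁻¹ᵁ U)) ⊓ (pullback.snd G.hom W.hom ⁻¹ᵁ (p ⁻¹ᵁ U)))
        inf_le_right s)

section Statement12

variable (K A : Type) [Field K] [CommRing A] [HopfAlgebra K A]

/-- The fibers of the quotient comodule `Q` over all field-valued points of `Spec C` are
isomorphic to the regular representation of `G = Spec A`. -/
def FibersRegularRep (C : Type) [CommRing C] [Algebra K C]
    (Q : Type) [AddCommGroup Q] [Module K Q] [Module C Q] [IsScalarTower K C Q]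
    (ρQ : Q →ₗ[K] A ⊗[K] Q) : Prop :=
  ∀ (κ : Type) [Field κ] [Algebra K κ] [Algebra C κ] [IsScalarTower K C κ],
    ∃ ρκ : (κ ⊗[C] Q) →ₗ[K] A ⊗[K] (κ ⊗[C] Q),
      (∀ (c : κ) (x : Q), ρκ (c ⊗ₜ[C] x)
        = LinearMap.lTensor A (((TensorProduct.mk C κ Q) c).restrictScalars K) (ρQ x)) ∧
      ∃ e : (κ ⊗[C] Q) ≃ₗ[K] κ ⊗[K] A,
        (∀ (c : κ) (v : κ ⊗[C] Q), e (c • v) = c • e v) ∧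
        ∀ v, LinearMap.lTensor A e.toLinearMap (ρκ v)
          = ((TensorProduct.leftComm K κ A A).toLinearMap
              ∘ₗ LinearMap.lTensor κ (Coalgebra.comul (R := K))) (e v)

/-- Let `K` be a field, `G = Spec A` a finite group scheme over `K` with
`A` cosemisimple, `S` a `K`-scheme and `X = Spec_S B` affine over `S` with `G`-operation over
`S`; here rendered algebraically with `S = Spec R` and `B` an `R`-algebra with coaction `ρB`.
The natural morphism of `S`-functors `GHilb_S X ⟶ GGrass_S(B)`, sending a quotient `G`-sheaf
of `B_T`-modules `[B_T → C]` to the underlying quotient of `O_T`-modules, is a closed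
embedding: for every point of `GGrass_S(B)` over `C'` (a `C'`-submodule `H ⊆ B ⊗ C'` whose
quotient is locally free of finite rank with regular-representation fibers) there is an
ideal `J ⊆ C'` such that for every `C'`-point `α : C' → C`, the pullback of the quotient to
`C` lies in `GHilb_S X (C)` — i.e. the pullback of `H` is an ideal — if and only if `α`
factors through `C'/J`. -/
theorem gHilbert_closed_in_gGrassmannian
    [Module.Finite K A] (hA : IsCosemisimple K A)
    (R : Type) [CommRing R] [Algebra K R]
    -- `X = Spec_S B` with the `G`-operation given by the coaction `ρB`:
    (B : Type) [CommRing B] [Algebra K B] [Algebra R B] [IsScalarTower K R B]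
    (ρB : B →ₐ[R] B ⊗[K] A)
    (hcounit : ∀ b : B,
      (TensorProduct.rid K B) (LinearMap.lTensor B (Coalgebra.counit (R := K))
        ((ρB b : B ⊗[K] A))) = b)
    (hcoassoc : ∀ b : B,
      LinearMap.lTensor B (Coalgebra.comul (R := K)) (ρB b)
        = (TensorProduct.assoc K B A A)
            (LinearMap.rTensor A ((ρB : B →ₐ[R] B ⊗[K] A).toLinearMap.restrictScalars K)
              (ρB b)))
    -- a `C'`-valued point of the `G`-Grassmannian `GGrass_S(B)`:
    (C' : Type) [CommRing C'] [Algebra K C'] [Algebra R C'] [IsScalarTower K R C']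
    (H : Submodule C' (C' ⊗[R] B))
    -- whose quotient is locally free of finite rank,
    (hfin : Module.Finite C' ((C' ⊗[R] B) ⧸ H))
    (hproj : Module.Projective C' ((C' ⊗[R] B) ⧸ H))
    -- is a quotient of `G`-sheaves, i.e. `H` is a subcomodule,
    (hsubcom : ∀ x ∈ H,
      ((TensorProduct.AlgebraTensorModule.assoc K R R C' B A).symm.toLinearMap
        (LinearMap.lTensor C' (ρB.toLinearMap) x))
      ∈ LinearMap.range (LinearMap.rTensor A ((H.restrictScalars K).subtype)))
    -- and whose fibers are isomorphic to the regular representation: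
    (ρQ : ((C' ⊗[R] B) ⧸ H) →ₗ[K] A ⊗[K] ((C' ⊗[R] B) ⧸ H))
    (hρQ : ∀ x : C' ⊗[R] B,
      ρQ (Submodule.Quotient.mk x)
        = LinearMap.lTensor A ((H.mkQ).restrictScalars K)
            ((TensorProduct.comm K (C' ⊗[R] B) A).toLinearMap
              ((TensorProduct.AlgebraTensorModule.assoc K R R C' B A).symm.toLinearMap
                (LinearMap.lTensor C' (ρB.toLinearMap) x))))
    (hreg : FibersRegularRep K A C' ((C' ⊗[R] B) ⧸ H) ρQ) :
    -- the ideal `J` cutting out the locus where the quotient lies in the `G`-Hilbert functor: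
    ∃ J : Ideal C',
      ∀ (C : Type) [CommRing C] [Algebra R C] [Algebra C' C] [IsScalarTower R C' C],
        ((∀ x ∈ Submodule.span C
            ((LinearMap.rTensor B (IsScalarTower.toAlgHom R C' C).toLinearMap) ''
              (H : Set (C' ⊗[R] B))),
          ∀ y : C ⊗[R] B, y * x ∈ Submodule.span C
            ((LinearMap.rTensor B (IsScalarTower.toAlgHom R C' C).toLinearMap) ''
              (H : Set (C' ⊗[R] B))))
        ↔ J ≤ RingHom.ker (algebraMap C' C)) := by
  classical
  haveI := hfin; haveI := hproj
  obtain ⟨n, π, hπ⟩ := Module.Finite.exists_fin' C' ((C' ⊗[R] B) ⧸ H)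
  obtain ⟨s, hs⟩ := Module.projective_lifting_property π LinearMap.id hπ
  have hsπ : ∀ q, π (s q) = q := fun q => by
    have := congrArg (fun F => F q) hs; simpa using this
  -- lifts of the "basis" vectors `π (single i 1)` to `C' ⊗[R] B`
  choose p hp using fun i : Fin n =>
    Submodule.Quotient.mk_surjective H (π (fun j => if i = j then 1 else 0))
  refine ⟨Ideal.span {c : C' | ∃ h ∈ H, ∃ b : C' ⊗[R] B, ∃ i : Fin n,
      c = s (H.mkQ (b * h)) i}, ?_⟩
  intro C _ _ _ _
  set f : C' ⊗[R] B →ₗ[R] C ⊗[R] B :=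
    LinearMap.rTensor B (IsScalarTower.toAlgHom R C' C).toLinearMap with hfdef
  set N : Submodule C (C ⊗[R] B) :=
    Submodule.span C (f '' (H : Set (C' ⊗[R] B))) with hNdef
  have hf_tmul : ∀ (c : C') (b : B), f (c ⊗ₜ[R] b) = algebraMap C' C c ⊗ₜ[R] b := by
    intro c b
    simp [hfdef, LinearMap.rTensor_tmul]
  have hf_smul : ∀ (c : C') (x : C' ⊗[R] B), f (c • x) = algebraMap C' C c • f x := by
    intro c x
    induction x using TensorProduct.induction_on with
    | zero => simp
    | tmul a b =>
        rw [smul_tmul', smul_eq_mul, hf_tmul, hf_tmul, smul_tmul', smul_eq_mul, map_mul]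
    | add u w hu hw => rw [smul_add, map_add, hu, hw, map_add, smul_add]
  have hf_mul : ∀ x y : C' ⊗[R] B, f (x * y) = f x * f y := by
    intro x y
    induction x using TensorProduct.induction_on with
    | zero => rw [zero_mul, map_zero, zero_mul]
    | tmul a b =>
        induction y using TensorProduct.induction_on with
        | zero => rw [mul_zero, map_zero, mul_zero]
        | tmul a' b' =>
            rw [Algebra.TensorProduct.tmul_mul_tmul, hf_tmul, hf_tmul, hf_tmul,
              Algebra.TensorProduct.tmul_mul_tmul, map_mul]
        | add u w hu hw => rw [mul_add, map_add, hu, hw, map_add, mul_add]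
    | add u w hu hw => rw [add_mul, map_add, hu, hw, map_add, add_mul]
  -- coordinate linear functionals on `C ⊗[R] B`
  let sc : Fin n → (C' ⊗[R] B →ₗ[C'] C') := fun i =>
    LinearMap.proj i ∘ₗ (s ∘ₗ H.mkQ)
  let ψ : Fin n → (B →ₗ[R] C) := fun i =>
    (IsScalarTower.toAlgHom R C' C).toLinearMap ∘ₗ ((sc i).restrictScalars R) ∘ₗ
      ((TensorProduct.mk R C' B) 1)
  let Φ : Fin n → (C ⊗[R] B →ₗ[R] C) := fun i =>
    LinearMap.mul' R C ∘ₗ LinearMap.lTensor C (ψ i)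
  have hψ : ∀ (i) (b : B), ψ i b = algebraMap C' C (s (H.mkQ ((1 : C') ⊗ₜ[R] b)) i) := by
    intro i b; rfl
  have hΦ_tmul : ∀ (i) (c : C) (b : B), Φ i (c ⊗ₜ[R] b) = c * ψ i b := by
    intro i c b
    simp [Φ, LinearMap.mul'_apply]
  have hΦ_smul : ∀ (i) (c : C) (x : C ⊗[R] B), Φ i (c • x) = c * Φ i x := by
    intro i c x
    induction x using TensorProduct.induction_on with
    | zero => simp
    | tmul a b => rw [smul_tmul', smul_eq_mul, hΦ_tmul, hΦ_tmul, mul_assoc]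
    | add u w hu hw => rw [smul_add, map_add, hu, hw, map_add, mul_add]
  have hΦf : ∀ (i) (x : C' ⊗[R] B), Φ i (f x) = algebraMap C' C (s (H.mkQ x) i) := by
    intro i x
    induction x using TensorProduct.induction_on with
    | zero => simp
    | tmul c b =>
        have h1 : (c ⊗ₜ[R] b : C' ⊗[R] B) = c • ((1 : C') ⊗ₜ[R] b) := by
          rw [smul_tmul', smul_eq_mul, mul_one]
        rw [hf_tmul, hΦ_tmul, hψ, ← map_mul]
        congr 1
        rw [h1, map_smul, map_smul, Pi.smul_apply, smul_eq_mul]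
    | add u w hu hw =>
        rw [map_add, map_add, hu, hw, ← map_add]
        congr 1
        rw [map_add, map_add]
        rfl
  have hΦN : ∀ i, ∀ z ∈ N, Φ i z = 0 := by
    intro i z hz
    induction hz using Submodule.span_induction with
    | mem z hz =>
        obtain ⟨h, hh, rfl⟩ := hz
        have h0 : H.mkQ h = 0 := (Submodule.Quotient.mk_eq_zero H).2 hh
        rw [hΦf, h0, map_zero]
        simp
    | zero => simp
    | add u w hu hw hpu hpw => rw [map_add, hpu, hpw, add_zero]
    | smul c u hu hpu => rw [hΦ_smul, hpu, mul_zero]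
  have hkey : ∀ x : C' ⊗[R] B,
      f x ∈ N ↔ ∀ i, algebraMap C' C (s (H.mkQ x) i) = 0 := by
    intro x
    constructor
    · intro hx i
      rw [← hΦf]
      exact hΦN i _ hx
    · intro hcoord
      set d : C' ⊗[R] B := ∑ i, s (H.mkQ x) i • p i with hd
      have hmem : x - d ∈ H := by
        rw [← Submodule.Quotient.mk_eq_zero H]
        have hmk : H.mkQ (x - d) = 0 := by
          rw [map_sub, hd, map_sum]
          have h2 : ∑ i, H.mkQ (s (H.mkQ x) i • p i) = π (s (H.mkQ x)) := by
            rw [LinearMap.pi_apply_eq_sum_univ π (s (H.mkQ x))]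
            refine Finset.sum_congr rfl fun i _ => ?_
            rw [map_smul]
            exact congrArg (fun z => s (H.mkQ x) i • z) (hp i)
          rw [h2, hsπ, sub_self]
        simpa [Submodule.mkQ_apply] using hmk
      have hfd : f d = 0 := by
        rw [hd, map_sum]
        refine Finset.sum_eq_zero fun i _ => ?_
        rw [hf_smul, hcoord, zero_smul]
      have hfx : f x = f (x - d) + f d := by
        rw [← map_add, sub_add_cancel]
      rw [hfx, hfd, add_zero]
      exact Submodule.subset_span ⟨x - d, hmem, rfl⟩
  constructor
  · intro hcond
    rw [Ideal.span_le]
    rintro c ⟨h, hh, b, i, rfl⟩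
    have h1 : f h ∈ N := Submodule.subset_span ⟨h, hh, rfl⟩
    have h2 : f (b * h) ∈ N := by
      rw [hf_mul]
      exact hcond (f h) h1 (f b)
    exact RingHom.mem_ker.mpr ((hkey _).1 h2 i)
  · intro hJ x hx y
    induction hx using Submodule.span_induction with
    | mem z hz =>
        obtain ⟨h, hh, rfl⟩ := hz
        induction y using TensorProduct.induction_on with
        | zero => rw [zero_mul]; exact N.zero_mem
        | tmul c b =>
            have hcoord : ∀ i,
                algebraMap C' C (s (H.mkQ (((1 : C') ⊗ₜ[R] b) * h)) i) = 0 := by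
              intro i
              exact RingHom.mem_ker.mp
                (hJ (Ideal.subset_span ⟨h, hh, (1 : C') ⊗ₜ[R] b, i, rfl⟩))
            have hb : f (((1 : C') ⊗ₜ[R] b) * h) ∈ N := (hkey _).2 hcoord
            have heq : (c ⊗ₜ[R] b : C ⊗[R] B) * f h
                = c • f (((1 : C') ⊗ₜ[R] b) * h) := by
              rw [hf_mul, hf_tmul, map_one, ← smul_mul_assoc, smul_tmul', smul_eq_mul,
                mul_one]
            rw [heq]
            exact N.smul_mem c hb
        | add u w hu hw => rw [add_mul]; exact N.add_mem hu hw
    | zero => rw [mul_zero]; exact N.zero_mem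
    | add u w hu hw hpu hpw => rw [mul_add]; exact N.add_mem hpu hpw
    | smul c u hu hpu => rw [mul_smul_comm]; exact N.smul_mem c hpu


end Statement12

end GHilbPaper
end
end

section
/- Let S be a scheme, X an S-scheme, and A an O_S-coalgebra which decomposes into a direct sum of O_S-subcoalgebras A = ⊕_i A_i. Then every A-comodule F on X (a quasicoherent O_X-module with a coaction F → A ⊗_{O_S} F satisfying the comodule axioms) decomposes as a direct sum F = ⊕_i F_i of A-subcomodules F_i such that the comodule structure of F_i reduces to that of an A_i-comodule, i.e. the coaction of F_i factors through A_i ⊗_{O_S} F_i. -/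
open CategoryTheory AlgebraicGeometry Limits TensorProduct Opposite

noncomputable section

namespace GHilbPaper

/-! ### Group schemes (via their functors of points) and actions -/

variable {S : Scheme}

variable {S : Scheme}

variable {G : Over S} {law : GroupLaw G} {X : Over S}

/-- Let `A` be an `O_S`-coalgebra decomposing as a direct sum of
subcoalgebras `A = ⊕ᵢ Aᵢ`. Then every `A`-comodule `F` (here in the algebraic incarnation:
a module `M` over an `O_S`-algebra `B` with an `A`-coaction `ρ : M → M ⊗ A` satisfying the
comodule axioms) decomposes as a direct sum `M = ⊕ᵢ Mᵢ` of `A`-subcomodules whose coactions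
factor through `Mᵢ ⊗ Aᵢ`. -/
theorem comodule_decomposition_of_coalgebra_decomposition
    (R : Type) [CommRing R]
    (A : Type) [AddCommGroup A] [Module R A] [Coalgebra R A]
    (ι : Type) (𝒜 : ι → Submodule R A)
    (hsub : ∀ i, IsSubcoalgebra R A (𝒜 i))
    (hind : iSupIndep 𝒜) (htop : iSup 𝒜 = ⊤)
    (B : Type) [CommRing B] [Algebra R B]
    (M : Type) [AddCommGroup M] [Module R M] [Module B M]
    [IsScalarTower R B M] [SMulCommClass R B M]
    (ρ : M →ₗ[B] M ⊗[R] A)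
    (hcounit : ∀ m : M,
      (TensorProduct.rid R M) (LinearMap.lTensor M (Coalgebra.counit (R := R)) (ρ m)) = m)
    (hcoassoc : ∀ m : M,
      LinearMap.lTensor M (Coalgebra.comul (R := R)) (ρ m)
        = (TensorProduct.assoc R M A A)
            (LinearMap.rTensor A (ρ.restrictScalars R) (ρ m))) :
    ∃ Mdec : ι → Submodule B M,
      iSupIndep Mdec ∧ iSup Mdec = ⊤ ∧
      ∀ i, ∀ m ∈ Mdec i, ρ m ∈ LinearMap.range
        (TensorProduct.map ((Mdec i).restrictScalars R).subtype (𝒜 i).subtype) := by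
  classical
  have hInt : DirectSum.IsInternal 𝒜 :=
    (DirectSum.isInternal_submodule_iff_iSupIndep_and_iSup_eq_top 𝒜).mpr ⟨hind, htop⟩
  -- the projections onto the summands `𝒜 i`
  let p : ι → A →ₗ[R] A := fun i =>
    (𝒜 i).subtype ∘ₗ (DirectSum.component R ι (fun j => (𝒜 j : Submodule R A)) i) ∘ₗ
      ((LinearEquiv.ofBijective (DirectSum.coeLinearMap 𝒜) hInt).symm :
        A →ₗ[R] DirectSum ι fun j => (𝒜 j : Submodule R A))
  have hp_apply : ∀ i a, p i a
      = (((LinearEquiv.ofBijective (DirectSum.coeLinearMap 𝒜) hInt).symm a) i : A) :=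
    fun i a => rfl
  have hp_mem : ∀ i a, p i a ∈ 𝒜 i := fun i a => by
    rw [hp_apply]; exact SetLike.coe_mem _
  have hp_self : ∀ i, ∀ a ∈ 𝒜 i, p i a = a := by
    intro i a ha
    rw [hp_apply, hInt.ofBijective_coeLinearMap_of_mem ha]
  have hp_ne : ∀ i j, j ≠ i → ∀ a ∈ 𝒜 j, p i a = 0 := by
    intro i j hji a ha
    rw [hp_apply, show a = ((⟨a, ha⟩ : 𝒜 j) : A) from rfl,
      hInt.ofBijective_coeLinearMap_of_ne hji]
    rfl
  have hp_idem : ∀ i a, p i (p i a) = p i a := fun i a => hp_self i _ (hp_mem i a)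
  have hp_orth : ∀ i j, i ≠ j → ∀ a, p i (p j a) = 0 :=
    fun i j h a => hp_ne i j (Ne.symm h) _ (hp_mem j a)
  have hp_sum : ∀ a : A, ∃ s : Finset ι, (∀ i ∉ s, p i a = 0) ∧ ∑ i ∈ s, p i a = a := by
    intro a
    set x := (LinearEquiv.ofBijective (DirectSum.coeLinearMap 𝒜) hInt).symm a with hx
    refine ⟨DFinsupp.support x, ?_, ?_⟩
    · intro i hi
      rw [hp_apply, ← hx, DFinsupp.notMem_support_iff.mp hi]
      rfl
    · have hsum : (∑ i ∈ DFinsupp.support x,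
          DirectSum.of (fun j => (𝒜 j : Submodule R A)) i (x i)) = x :=
        DirectSum.sum_support_of x
      calc ∑ i ∈ DFinsupp.support x, p i a
          = ∑ i ∈ DFinsupp.support x,
              (DirectSum.coeLinearMap 𝒜) (DirectSum.of (fun j => (𝒜 j : Submodule R A)) i (x i)) := by
            refine Finset.sum_congr rfl fun i _ => ?_
            rw [hp_apply, ← hx, DirectSum.coeLinearMap_of]
        _ = (DirectSum.coeLinearMap 𝒜) x := by rw [← map_sum, hsum]
        _ = a := by
            rw [hx]
            exact (LinearEquiv.ofBijective (DirectSum.coeLinearMap 𝒜) hInt).apply_symm_apply a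
  -- basic tensor notation
  let cε : M ⊗[R] A →ₗ[R] M :=
    (TensorProduct.rid R M).toLinearMap ∘ₗ LinearMap.lTensor M (Coalgebra.counit (R := R))
  have hcε : ∀ (m : M) (a : A), cε (m ⊗ₜ[R] a) = Coalgebra.counit (R := R) a • m := by
    intro m a
    simp [cε]
  have hcε_ρ : ∀ m : M, cε (ρ m) = m := fun m => hcounit m
  let q : ι → M ⊗[R] A →ₗ[R] M ⊗[R] A := fun i => LinearMap.lTensor M (p i)
  let ρR : M →ₗ[R] M ⊗[R] A := ρ.restrictScalars R
  let φ : ι → M →ₗ[R] M := fun i => cε ∘ₗ q i ∘ₗ ρR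
  have hφ_apply : ∀ i m, φ i m = cε (q i (ρ m)) := fun i m => rfl
  have hq_idem : ∀ i t, q i (q i t) = q i t := by
    intro i t
    rw [show q i = LinearMap.lTensor M (p i) from rfl, ← LinearMap.lTensor_comp_apply,
      show p i ∘ₗ p i = p i from LinearMap.ext (hp_idem i)]
  have hq_orth : ∀ i j, i ≠ j → ∀ t, q i (q j t) = 0 := by
    intro i j h t
    rw [show q i = LinearMap.lTensor M (p i) from rfl,
      show q j = LinearMap.lTensor M (p j) from rfl, ← LinearMap.lTensor_comp_apply,
      show p i ∘ₗ p j = 0 from LinearMap.ext (hp_orth i j h), LinearMap.lTensor_zero]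
    rfl
  have hq_smul : ∀ i (b : B) (t : M ⊗[R] A), q i (b • t) = b • q i t := by
    intro i b t
    induction t using TensorProduct.induction_on with
    | zero => simp
    | tmul m a => rw [TensorProduct.smul_tmul']; simp [q, TensorProduct.smul_tmul']
    | add t₁ t₂ ih₁ ih₂ => rw [smul_add, map_add, ih₁, ih₂, map_add, smul_add]
  have hq_sum : ∀ t : M ⊗[R] A, ∃ s : Finset ι, (∀ i ∉ s, q i t = 0) ∧ ∑ i ∈ s, q i t = t := by
    intro t
    induction t using TensorProduct.induction_on with
    | zero => exact ⟨∅, fun i _ => by simp, by simp⟩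
    | tmul m a =>
      obtain ⟨s, h0, hsum⟩ := hp_sum a
      refine ⟨s, fun i hi => ?_, ?_⟩
      · simp [q, h0 i hi]
      · calc ∑ i ∈ s, q i (m ⊗ₜ[R] a) = ∑ i ∈ s, m ⊗ₜ[R] (p i a) := by simp [q]
          _ = m ⊗ₜ[R] (∑ i ∈ s, p i a) := (TensorProduct.tmul_sum m _ _).symm
          _ = m ⊗ₜ[R] a := by rw [hsum]
    | add t₁ t₂ ih₁ ih₂ =>
      obtain ⟨s₁, h₁, hs₁⟩ := ih₁
      obtain ⟨s₂, h₂, hs₂⟩ := ih₂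
      refine ⟨s₁ ∪ s₂, fun i hi => ?_, ?_⟩
      · rw [map_add, h₁ i (fun h => hi (Finset.mem_union_left _ h)),
          h₂ i (fun h => hi (Finset.mem_union_right _ h)), add_zero]
      · have e₁ : ∑ i ∈ s₁ ∪ s₂, q i t₁ = ∑ i ∈ s₁, q i t₁ :=
          (Finset.sum_subset Finset.subset_union_left (fun i _ hi => h₁ i hi)).symm
        have e₂ : ∑ i ∈ s₁ ∪ s₂, q i t₂ = ∑ i ∈ s₂, q i t₂ :=
          (Finset.sum_subset Finset.subset_union_right (fun i _ hi => h₂ i hi)).symm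
        simp only [map_add, Finset.sum_add_distrib, e₁, e₂, hs₁, hs₂]
  -- the two projections on `A⊗A` composed with comultiplication give back `p i`
  let H : ι → A ⊗[R] A →ₗ[R] A := fun i =>
    (TensorProduct.rid R A).toLinearMap ∘ₗ LinearMap.lTensor A ((Coalgebra.counit (R := R)) ∘ₗ p i)
  let W : ι → A ⊗[R] A →ₗ[R] A := fun i =>
    (TensorProduct.lid R A).toLinearMap ∘ₗ LinearMap.rTensor A ((Coalgebra.counit (R := R)) ∘ₗ p i)
  have hHW : ∀ i a, H i (Coalgebra.comul (R := R) a) = p i a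
      ∧ W i (Coalgebra.comul (R := R) a) = p i a := by
    intro i a
    have ha : a ∈ ⨆ j, 𝒜 j := htop ▸ Submodule.mem_top
    refine Submodule.iSup_induction 𝒜
      (motive := fun a => H i (Coalgebra.comul (R := R) a) = p i a
        ∧ W i (Coalgebra.comul (R := R) a) = p i a) ha ?_ (by simp) ?_
    · intro j x hx
      obtain ⟨u, hu⟩ := hsub j x hx
      by_cases hji : j = i
      · subst hji
        have keyH : ∀ u : (𝒜 j : Submodule R A) ⊗[R] (𝒜 j : Submodule R A),
            H j (TensorProduct.map (𝒜 j).subtype (𝒜 j).subtype u)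
              = (TensorProduct.rid R A)
                (LinearMap.lTensor A (Coalgebra.counit (R := R))
                  (TensorProduct.map (𝒜 j).subtype (𝒜 j).subtype u)) := by
          intro u
          induction u using TensorProduct.induction_on with
          | zero => simp
          | tmul x' y' => simp [H, hp_self j _ y'.2]
          | add u₁ u₂ ih₁ ih₂ => simp only [map_add, ih₁, ih₂]
        have keyW : ∀ u : (𝒜 j : Submodule R A) ⊗[R] (𝒜 j : Submodule R A),
            W j (TensorProduct.map (𝒜 j).subtype (𝒜 j).subtype u)
              = (TensorProduct.lid R A)
                (LinearMap.rTensor A (Coalgebra.counit (R := R))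
                  (TensorProduct.map (𝒜 j).subtype (𝒜 j).subtype u)) := by
          intro u
          induction u using TensorProduct.induction_on with
          | zero => simp
          | tmul x' y' => simp [W, hp_self j _ x'.2]
          | add u₁ u₂ ih₁ ih₂ => simp only [map_add, ih₁, ih₂]
        constructor
        · rw [← hu, keyH, hu, Coalgebra.lTensor_counit_comul, TensorProduct.rid_tmul,
            one_smul, hp_self j x hx]
        · rw [← hu, keyW, hu, Coalgebra.rTensor_counit_comul, TensorProduct.lid_tmul,
            one_smul, hp_self j x hx]
      · have keyH : ∀ u : (𝒜 j : Submodule R A) ⊗[R] (𝒜 j : Submodule R A),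
            H i (TensorProduct.map (𝒜 j).subtype (𝒜 j).subtype u) = 0 := by
          intro u
          induction u using TensorProduct.induction_on with
          | zero => simp
          | tmul x' y' => simp [H, hp_ne i j hji _ y'.2]
          | add u₁ u₂ ih₁ ih₂ => simp only [map_add, ih₁, ih₂, add_zero]
        have keyW : ∀ u : (𝒜 j : Submodule R A) ⊗[R] (𝒜 j : Submodule R A),
            W i (TensorProduct.map (𝒜 j).subtype (𝒜 j).subtype u) = 0 := by
          intro u
          induction u using TensorProduct.induction_on with
          | zero => simp
          | tmul x' y' => simp [W, hp_ne i j hji _ x'.2]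
          | add u₁ u₂ ih₁ ih₂ => simp only [map_add, ih₁, ih₂, add_zero]
        rw [← hu, keyH, keyW, hp_ne i j hji x hx]
        exact ⟨rfl, rfl⟩
    · rintro x y ⟨hx₁, hx₂⟩ ⟨hy₁, hy₂⟩
      simp only [map_add, hx₁, hx₂, hy₁, hy₂]
      trivial
  have hHΔ : ∀ i, H i ∘ₗ (Coalgebra.comul (R := R) (A := A)) = p i :=
    fun i => LinearMap.ext fun a => (hHW i a).1
  have hWΔ : ∀ i, W i ∘ₗ (Coalgebra.comul (R := R) (A := A)) = p i :=
    fun i => LinearMap.ext fun a => (hHW i a).2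
  -- `ρ ∘ φ i = q i ∘ ρ`
  have hρφ : ∀ i m, ρ (φ i m) = q i (ρ m) := by
    intro i m
    have L1 : ∀ (u : M ⊗[R] A) (a : A),
        LinearMap.lTensor M (H i) ((TensorProduct.assoc R M A A) (u ⊗ₜ[R] a))
          = Coalgebra.counit (R := R) (p i a) • u := by
      intro u a
      induction u using TensorProduct.induction_on with
      | zero => simp
      | tmul m' a' =>
        rw [TensorProduct.assoc_tmul, LinearMap.lTensor_tmul]
        simp [H, TensorProduct.tmul_smul]
      | add u₁ u₂ ih₁ ih₂ =>
        rw [TensorProduct.add_tmul, map_add, map_add, ih₁, ih₂, smul_add]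
    have L2 : ∀ t : M ⊗[R] A,
        ρR (cε (q i t))
          = LinearMap.lTensor M (H i)
              ((TensorProduct.assoc R M A A) (LinearMap.rTensor A ρR t)) := by
      intro t
      induction t using TensorProduct.induction_on with
      | zero => simp
      | tmul m' a =>
        rw [show q i (m' ⊗ₜ[R] a) = m' ⊗ₜ[R] p i a from rfl, hcε, map_smul,
          LinearMap.rTensor_tmul, L1]
      | add t₁ t₂ ih₁ ih₂ => simp only [map_add, ih₁, ih₂]
    have : ρ (φ i m) = ρR (cε (q i (ρ m))) := rfl
    rw [this, L2, ← hcoassoc m, ← LinearMap.lTensor_comp_apply, hHΔ i]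
  -- `(φ i ⊗ 1) ∘ ρ = q i ∘ ρ`
  have hstar : ∀ i m, LinearMap.rTensor A (φ i) (ρ m) = q i (ρ m) := by
    intro i m
    have L3a : ∀ (m' : M) (v : A ⊗[R] A),
        LinearMap.rTensor A (cε ∘ₗ q i) ((TensorProduct.assoc R M A A).symm (m' ⊗ₜ[R] v))
          = m' ⊗ₜ[R] (TensorProduct.lid R A)
              (LinearMap.rTensor A ((Coalgebra.counit (R := R)) ∘ₗ p i) v) := by
      intro m' v
      induction v using TensorProduct.induction_on with
      | zero => simp
      | tmul a₁ a₂ =>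
        rw [TensorProduct.assoc_symm_tmul, LinearMap.rTensor_tmul, LinearMap.comp_apply,
          show q i (m' ⊗ₜ[R] a₁) = m' ⊗ₜ[R] p i a₁ from rfl, hcε,
          LinearMap.rTensor_tmul]
        simp [TensorProduct.smul_tmul]
      | add v₁ v₂ ih₁ ih₂ =>
        simp only [TensorProduct.tmul_add, map_add, ih₁, ih₂]
    have L3 : ∀ t : M ⊗[R] A,
        LinearMap.rTensor A (cε ∘ₗ q i)
            ((TensorProduct.assoc R M A A).symm
              (LinearMap.lTensor M (Coalgebra.comul (R := R)) t)) = q i t := by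
      intro t
      induction t using TensorProduct.induction_on with
      | zero => simp
      | tmul m' a =>
        rw [LinearMap.lTensor_tmul, L3a]
        have : (TensorProduct.lid R A)
            (LinearMap.rTensor A ((Coalgebra.counit (R := R)) ∘ₗ p i)
              (Coalgebra.comul (R := R) a)) = W i (Coalgebra.comul (R := R) a) := rfl
        rw [this, (hHW i a).2]
        rfl
      | add t₁ t₂ ih₁ ih₂ => rw [map_add, map_add, map_add, ih₁, ih₂, map_add]
    have h1 : LinearMap.rTensor A (φ i) (ρ m)
        = LinearMap.rTensor A (cε ∘ₗ q i) (LinearMap.rTensor A ρR (ρ m)) := by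
      rw [show φ i = (cε ∘ₗ q i) ∘ₗ ρR from rfl, LinearMap.rTensor_comp, LinearMap.comp_apply]
    have h2 : LinearMap.rTensor A ρR (ρ m)
        = (TensorProduct.assoc R M A A).symm
            (LinearMap.lTensor M (Coalgebra.comul (R := R)) (ρ m)) := by
      rw [hcoassoc m, LinearEquiv.symm_apply_apply]
    rw [h1, h2, L3]
  -- the submodules
  let Mdec : ι → Submodule B M := fun i =>
    { carrier := {m | q i (ρ m) = ρ m}
      add_mem' := by
        intro a b ha hb
        simp only [Set.mem_setOf_eq, map_add] at *
        rw [ha, hb]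
      zero_mem' := by simp
      smul_mem' := by
        intro b m hm
        simp only [Set.mem_setOf_eq] at *
        rw [map_smul, hq_smul, hm] }
  have hmem : ∀ i (m : M), m ∈ Mdec i ↔ q i (ρ m) = ρ m := fun i m => Iff.rfl
  have hφ_mem : ∀ i m, φ i m ∈ Mdec i := by
    intro i m
    rw [hmem, hρφ i m, hq_idem, ← hρφ i m]
  have hφ_self : ∀ i, ∀ m ∈ Mdec i, φ i m = m := by
    intro i m hm
    rw [hφ_apply, (hmem i m).mp hm, hcε_ρ]
  have hφ_zero : ∀ i j, i ≠ j → ∀ m ∈ Mdec j, φ i m = 0 := by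
    intro i j hij m hm
    rw [hφ_apply, ← (hmem j m).mp hm, hq_orth i j hij, map_zero]
  refine ⟨Mdec, ?_, ?_, ?_⟩
  · -- independence
    intro i
    refine Submodule.disjoint_def.mpr fun m hmi hmj => ?_
    have h0 : φ i m = 0 := by
      refine Submodule.iSup_induction (fun j => ⨆ _ : j ≠ i, Mdec j)
        (motive := fun m => φ i m = 0) hmj ?_ (map_zero _) ?_
      · intro j x hx
        replace hx : x ∈ ⨆ _ : j ≠ i, Mdec j := hx
        by_cases hji : j = i
        · subst hji
          rw [iSup_neg (fun h => h rfl)] at hx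
          rw [(Submodule.mem_bot B).mp hx, map_zero]
        · rw [iSup_pos hji] at hx
          exact hφ_zero i j (Ne.symm hji) x hx
      · intro x y hx hy
        rw [map_add, hx, hy, add_zero]
    rw [← hφ_self i m hmi, h0]
  · -- the sum is everything
    rw [eq_top_iff]
    intro m _
    obtain ⟨s, h0, hsum⟩ := hq_sum (ρ m)
    have h1 : ∑ i ∈ s, φ i m = m := by
      have h2 : ∑ i ∈ s, φ i m = cε (∑ i ∈ s, q i (ρ m)) := by
        rw [map_sum]
        exact Finset.sum_congr rfl fun i _ => hφ_apply i m
      rw [h2, hsum, hcε_ρ]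
    have h3 : (∑ i ∈ s, φ i m) ∈ iSup Mdec :=
      Submodule.sum_mem _ fun i _ => Submodule.mem_iSup_of_mem i (hφ_mem i m)
    rwa [h1] at h3
  · -- the coaction factors
    intro i m hm
    have h1 : ρ m = q i (ρ m) := ((hmem i m).mp hm).symm
    have h2 : ρ m = TensorProduct.map (φ i) (p i) (ρ m) := by
      calc ρ m = LinearMap.rTensor A (φ i) (ρ m) := by rw [hstar i m, ← h1]
        _ = LinearMap.rTensor A (φ i) (LinearMap.lTensor M (p i) (ρ m)) := by
            rw [show LinearMap.lTensor M (p i) (ρ m) = q i (ρ m) from rfl, ← h1]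
        _ = TensorProduct.map (φ i) (p i) (ρ m) := by
            rw [← LinearMap.comp_apply, LinearMap.rTensor_comp_lTensor]
    let φ' : M →ₗ[R] ((Mdec i).restrictScalars R) :=
      (φ i).codRestrict ((Mdec i).restrictScalars R) (fun m => hφ_mem i m)
    let p' : A →ₗ[R] (𝒜 i) := (p i).codRestrict (𝒜 i) (hp_mem i)
    have hfact : TensorProduct.map (φ i) (p i)
        = (TensorProduct.map ((Mdec i).restrictScalars R).subtype (𝒜 i).subtype) ∘ₗ
            TensorProduct.map φ' p' := by
      rw [← TensorProduct.map_comp, LinearMap.subtype_comp_codRestrict]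
      rfl
    exact ⟨TensorProduct.map φ' p' (ρ m), by rw [← LinearMap.comp_apply, ← hfact]; exact h2.symm⟩

end GHilbPaper
end
end
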